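/- Let F be an infinite field with char(F) ≠ 2 and let 1 ≤ k ≤ n. For every matrix A ∈ Mat_n(F) with prk(A) ≤ k and every polynomial f in the n² matrix entries with f(A) ≠ 0, there exists a matrix X ∈ Mat_n(F) such that prk(X) = k and f(X) ≠ 0. (Equivalently, Λ^k is Zariski dense in Λ^{≤k}.) -/
import Mathlib


open Matrix

/-- The permanental rank of a square matrix: the size of the largest square
submatrix with nonzero permanent. -/
noncomputable def prk {n : ℕ} {F : Type*} [Field F] (A : Matrix (Fin n) (Fin n) F) : ℕ :=
  sSup {k | ∃ r c : Fin k → Fin n, Function.Injective r ∧ Function.Injective c ∧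
    (A.submatrix r c).permanent ≠ 0}

/-- The permutation matrix of `σ`: its `(i,j)` entry is `1` if `j = σ⁻¹ i` and `0` otherwise. -/
def permMat {n : ℕ} (F : Type*) [Field F] (σ : Equiv.Perm (Fin n)) :
    Matrix (Fin n) (Fin n) F :=
  Matrix.of fun i j => if j = σ⁻¹ i then (1 : F) else 0

open Finset Function in
section
set_option linter.unusedSectionVars false
set_option linter.unusedVariables false

section PermanentLemmas

variable {R : Type*} [CommRing R] {m : Type*} [DecidableEq m] [Fintype m]

theorem permanent_updateCol_add (M : Matrix m m R) (j : m) (u v : m → R) :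
    (M.updateCol j (u + v)).permanent
      = (M.updateCol j u).permanent + (M.updateCol j v).permanent := by
  simp only [Matrix.permanent, ← Finset.mul_prod_erase _ _ (Finset.mem_univ j)]
  rw [← Finset.sum_add_distrib]
  refine Finset.sum_congr rfl fun σ _ => ?_
  have hrest : ∀ w : m → R, ∏ i ∈ univ.erase j, (M.updateCol j w) (σ i) i
      = ∏ i ∈ univ.erase j, M (σ i) i := fun w =>
    Finset.prod_congr rfl fun i hi => Matrix.updateCol_ne (Finset.ne_of_mem_erase hi)
  simp only [Matrix.updateCol_self, hrest, Pi.add_apply, add_mul]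

/-- Expansion: if column 0 of `M` is the standard basis vector `e₀`, the permanent of `M`
equals the permanent of the minor obtained by deleting row 0 and column 0. -/
theorem permanent_expand_zero {s : ℕ} (M : Matrix (Fin (s + 1)) (Fin (s + 1)) R)
    (hM : ∀ i, M i 0 = if i = 0 then (1 : R) else 0) :
    M.permanent = (M.submatrix Fin.succ Fin.succ).permanent := by
  unfold Matrix.permanent
  rw [← Equiv.Perm.decomposeFin.symm.sum_comp fun σ => ∏ i, M (σ i) i, Fintype.sum_prod_type]
  have hterm : ∀ p : Fin (s + 1), ∀ τ : Equiv.Perm (Fin s),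
      (∏ i, M (Equiv.Perm.decomposeFin.symm (p, τ) i) i)
        = (if p = 0 then (1:R) else 0) * ∏ i : Fin s, M (Equiv.Perm.decomposeFin.symm (p, τ) (Fin.succ i)) (Fin.succ i) := by
    intro p τ
    rw [Fin.prod_univ_succ, Equiv.Perm.decomposeFin_symm_apply_zero, hM]
  simp only [hterm, ite_mul, one_mul, zero_mul]
  rw [Finset.sum_comm]
  simp only [Finset.sum_ite_eq' Finset.univ (0 : Fin (s+1)), Finset.mem_univ, if_true]
  refine Finset.sum_congr rfl fun τ _ => Finset.prod_congr rfl fun i _ => ?_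
  rw [Equiv.Perm.decomposeFin_symm_apply_succ, Equiv.swap_self]
  simp [Matrix.submatrix_apply]

/-- Permanent after updating the `(0,0)` entry of a matrix to `x`. -/
theorem permanent_update_zero_zero {s : ℕ} (M : Matrix (Fin (s + 1)) (Fin (s + 1)) R) (x : R) :
    (M.updateCol 0 (Function.update (fun i => M i 0) 0 x)).permanent
      = M.permanent + (x - M 0 0) * (M.submatrix Fin.succ Fin.succ).permanent := by
  have hdecomp : Function.update (fun i => M i 0) 0 x
      = (fun i => M i 0) + (x - M 0 0) • (Pi.single (0 : Fin (s+1)) (1 : R) : Fin (s+1) → R) := by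
    funext i
    by_cases h : i = 0
    · subst h; simp
    · simp [h, Function.update_of_ne h, Pi.single_apply]
  rw [hdecomp, permanent_updateCol_add, Matrix.updateCol_eq_self,
    Matrix.permanent_updateCol_smul]
  congr 1
  have h1 : (M.updateCol 0 ((Pi.single (0 : Fin (s+1)) (1:R)) : Fin (s+1) → R)).permanent
      = ((M.updateCol 0 ((Pi.single (0 : Fin (s+1)) (1:R)) : Fin (s+1) → R)).submatrix Fin.succ Fin.succ).permanent := by
    apply permanent_expand_zero
    intro i
    simp [Pi.single_apply]
  have h2 : (M.updateCol 0 ((Pi.single (0 : Fin (s+1)) (1:R)) : Fin (s+1) → R)).submatrix Fin.succ Fin.succ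
      = M.submatrix Fin.succ Fin.succ := by
    ext a b
    simp [Matrix.updateCol_apply, Fin.succ_ne_zero]
  rw [h1, h2]

end PermanentLemmas

section Prk

variable {n : ℕ} {F : Type*} [Field F]

def prkSet {n : ℕ} {F : Type*} [Field F] (A : Matrix (Fin n) (Fin n) F) : Set ℕ :=
  {k | ∃ r c : Fin k → Fin n, Function.Injective r ∧ Function.Injective c ∧
    (A.submatrix r c).permanent ≠ 0}

lemma prkSet_nonempty (A : Matrix (Fin n) (Fin n) F) : (prkSet A).Nonempty := by
  refine ⟨0, Fin.elim0, Fin.elim0, fun x => x.elim0, fun x => x.elim0, ?_⟩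
  rw [Matrix.permanent_isEmpty]
  exact one_ne_zero

lemma prkSet_bddAbove (A : Matrix (Fin n) (Fin n) F) : BddAbove (prkSet A) := by
  refine ⟨n, fun s hs => ?_⟩
  obtain ⟨r, _, hr, _, _⟩ := hs
  simpa using Fintype.card_le_of_injective r hr

lemma prk_mem (A : Matrix (Fin n) (Fin n) F) : prk A ∈ prkSet A :=
  Nat.sSup_mem (prkSet_nonempty A) (prkSet_bddAbove A)

lemma le_prk {A : Matrix (Fin n) (Fin n) F} {s : ℕ} (hs : s ∈ prkSet A) : s ≤ prk A :=
  le_csSup (prkSet_bddAbove A) hs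

lemma per_eq_zero_of_prk_lt {A : Matrix (Fin n) (Fin n) F} {s : ℕ} (h : prk A < s)
    {r c : Fin s → Fin n} (hr : Function.Injective r) (hc : Function.Injective c) :
    (A.submatrix r c).permanent = 0 := by
  by_contra hper
  exact absurd (le_prk ⟨r, c, hr, hc, hper⟩) (by omega)

lemma prk_le {A : Matrix (Fin n) (Fin n) F} {t : ℕ} (h : ∀ s ∈ prkSet A, s ≤ t) : prk A ≤ t :=
  csSup_le (prkSet_nonempty A) h

end Prk

section Step

variable {n : ℕ} {F : Type*} [Field F]

/-- Update a single entry of a matrix. -/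
def updEntry (A : Matrix (Fin n) (Fin n) F) (i₀ j₀ : Fin n) (x : F) :
    Matrix (Fin n) (Fin n) F :=
  Matrix.of fun a b => if a = i₀ ∧ b = j₀ then x else A a b

lemma updEntry_self (A : Matrix (Fin n) (Fin n) F) (i₀ j₀ : Fin n) :
    updEntry A i₀ j₀ (A i₀ j₀) = A := by
  ext a b
  simp only [updEntry, Matrix.of_apply]
  split
  · rename_i h; rw [h.1, h.2]
  · rfl

lemma submatrix_updEntry_miss (A : Matrix (Fin n) (Fin n) F) (i₀ j₀ : Fin n) (x : F)
    {s : ℕ} (r c : Fin s → Fin n)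
    (h : (∀ a, r a ≠ i₀) ∨ (∀ b, c b ≠ j₀)) :
    (updEntry A i₀ j₀ x).submatrix r c = A.submatrix r c := by
  ext a b
  simp only [updEntry, Matrix.submatrix_apply, Matrix.of_apply]
  rw [if_neg]
  rintro ⟨h1, h2⟩
  rcases h with h | h
  · exact h a h1
  · exact h b h2

lemma submatrix_updEntry_hit (A : Matrix (Fin n) (Fin n) F) (i₀ j₀ : Fin n) (x : F)
    {s : ℕ} (r c : Fin (s + 1) → Fin n) (hr : Function.Injective r)
    (hc : Function.Injective c) (h0r : r 0 = i₀) (h0c : c 0 = j₀) :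
    (updEntry A i₀ j₀ x).submatrix r c
      = (A.submatrix r c).updateCol 0
          (Function.update (fun i => (A.submatrix r c) i 0) 0 x) := by
  ext a b
  simp only [updEntry, Matrix.submatrix_apply, Matrix.of_apply, Matrix.updateCol_apply]
  by_cases hb : b = 0
  · subst hb
    by_cases ha : a = 0
    · subst ha; simp [h0r, h0c]
    · rw [if_neg (fun hh => ha (hr (h0r ▸ hh.1))), if_pos rfl, Function.update_of_ne ha]
  · rw [if_neg (fun hh => hb (hc (h0c ▸ hh.2))), if_neg hb]

/-- The key permanent formula for a single-entry update. -/
lemma permanent_submatrix_updEntry (A : Matrix (Fin n) (Fin n) F) (i₀ j₀ : Fin n) (x : F)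
    {s : ℕ} (r c : Fin (s + 1) → Fin n) (hr : Function.Injective r)
    (hc : Function.Injective c) (h0r : r 0 = i₀) (h0c : c 0 = j₀) :
    ((updEntry A i₀ j₀ x).submatrix r c).permanent
      = (A.submatrix r c).permanent
        + (x - A i₀ j₀) * (A.submatrix (r ∘ Fin.succ) (c ∘ Fin.succ)).permanent := by
  rw [submatrix_updEntry_hit A i₀ j₀ x r c hr hc h0r h0c, permanent_update_zero_zero]
  rw [Matrix.submatrix_apply, h0r, h0c, Matrix.submatrix_submatrix]

end Step

section StepMain

variable {n : ℕ} {F : Type*} [Field F]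

lemma cons_injective {α : Type*} {m : ℕ} {i₀ : α} {r₀ : Fin m → α}
    (h1 : Function.Injective r₀) (h2 : ∀ a, r₀ a ≠ i₀) :
    Function.Injective (Fin.cons i₀ r₀ : Fin (m + 1) → α) := by
  intro a b hab
  cases a using Fin.cases with
  | zero =>
    cases b using Fin.cases with
    | zero => rfl
    | succ b => exact absurd (by simpa using hab.symm) (h2 b)
  | succ a =>
    cases b using Fin.cases with
    | zero => exact absurd (by simpa using hab) (h2 a)
    | succ b => exact congrArg Fin.succ (h1 (by simpa using hab))

lemma exists_notMem_range {m : ℕ} (hmn : m < n) (r₀ : Fin m → Fin n) :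
    ∃ i₀ : Fin n, ∀ a, r₀ a ≠ i₀ := by
  by_contra h
  push_neg at h
  have hsurj : Function.Surjective r₀ := fun i => by
    obtain ⟨a, ha⟩ := h i; exact ⟨a, ha⟩
  have := Fintype.card_le_of_surjective r₀ hsurj
  simp only [Fintype.card_fin] at this
  omega

lemma prk_updEntry (A : Matrix (Fin n) (Fin n) F) (hmn : prk A < n)
    {r₀ c₀ : Fin (prk A) → Fin n} (hr₀ : Function.Injective r₀)
    (hc₀ : Function.Injective c₀)
    (hper : ((A.submatrix r₀ c₀)).permanent ≠ 0)
    {i₀ j₀ : Fin n} (hi₀ : ∀ a, r₀ a ≠ i₀) (hj₀ : ∀ b, c₀ b ≠ j₀)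
    {x : F} (hx : x ≠ A i₀ j₀) :
    prk (updEntry A i₀ j₀ x) = prk A + 1 := by
  set A' := updEntry A i₀ j₀ x with hA'
  set r : Fin (prk A + 1) → Fin n := Fin.cons i₀ r₀ with hrdef
  set c : Fin (prk A + 1) → Fin n := Fin.cons j₀ c₀ with hcdef
  have hr : Function.Injective r := cons_injective hr₀ hi₀
  have hc : Function.Injective c := cons_injective hc₀ hj₀
  have hrsucc : r ∘ Fin.succ = r₀ := by funext a; simp [hrdef]
  have hcsucc : c ∘ Fin.succ = c₀ := by funext a; simp [hcdef]
  have hgain : ((A'.submatrix r c)).permanent ≠ 0 := by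
    rw [hA', permanent_submatrix_updEntry A i₀ j₀ x r c hr hc (by simp [hrdef]) (by simp [hcdef]),
      per_eq_zero_of_prk_lt (by omega) hr hc, hrsucc, hcsucc, zero_add]
    exact mul_ne_zero (sub_ne_zero_of_ne hx) hper
  apply le_antisymm
  · apply prk_le
    rintro s ⟨r', c', hr', hc', hpers⟩
    by_contra hcon
    push_neg at hcon
    obtain ⟨t, rfl⟩ : ∃ t, s = t + 1 := ⟨s - 1, by omega⟩
    apply hpers
    by_cases hhit : (∃ p, r' p = i₀) ∧ (∃ q, c' q = j₀)
    · obtain ⟨⟨p, hp⟩, ⟨q, hq⟩⟩ := hhit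
      set r'' : Fin (t + 1) → Fin n := r' ∘ (Equiv.swap 0 p) with hr''def
      set c'' : Fin (t + 1) → Fin n := c' ∘ (Equiv.swap 0 q) with hc''def
      have hr'' : Function.Injective r'' := hr'.comp (Equiv.swap 0 p).injective
      have hc'' : Function.Injective c'' := hc'.comp (Equiv.swap 0 q).injective
      have hkey : (A'.submatrix r' c').permanent = (A'.submatrix r'' c'').permanent := by
        have e1 : A'.submatrix r'' c''
            = ((A'.submatrix r' c').submatrix (Equiv.swap 0 p) id).submatrix id
                (Equiv.swap 0 q) := by
          ext a b; simp [hr''def, hc''def]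
        rw [e1, Matrix.permanent_permute_rows, Matrix.permanent_permute_cols]
      rw [hkey, hA', permanent_submatrix_updEntry A i₀ j₀ x r'' c'' hr'' hc''
          (by simp [hr''def, hp]) (by simp [hc''def, hq]),
        per_eq_zero_of_prk_lt (by omega) hr'' hc'',
        per_eq_zero_of_prk_lt (by omega) (hr''.comp (Fin.succ_injective t))
          (hc''.comp (Fin.succ_injective t))]
      ring
    · have hmiss : (∀ a, r' a ≠ i₀) ∨ (∀ b, c' b ≠ j₀) := by
        rcases not_and_or.mp hhit with h | h
        · left; push_neg at h; exact h
        · right; push_neg at h; exact h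
      rw [hA', submatrix_updEntry_miss A i₀ j₀ x r' c' hmiss]
      exact per_eq_zero_of_prk_lt (by omega) hr' hc'
  · exact le_prk ⟨r, c, hr, hc, hgain⟩

lemma step [Infinite F] (A : Matrix (Fin n) (Fin n) F) (hmn : prk A < n)
    (f : MvPolynomial (Fin n × Fin n) F)
    (hf : MvPolynomial.eval (fun p => A p.1 p.2) f ≠ 0) :
    ∃ A' : Matrix (Fin n) (Fin n) F, prk A' = prk A + 1 ∧
      MvPolynomial.eval (fun p => A' p.1 p.2) f ≠ 0 := by
  obtain ⟨r₀, c₀, hr₀, hc₀, hper⟩ := prk_mem A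
  obtain ⟨i₀, hi₀⟩ := exists_notMem_range hmn r₀
  obtain ⟨j₀, hj₀⟩ := exists_notMem_range hmn c₀
  set ψ : Fin n × Fin n → Polynomial F :=
    fun p => if p.1 = i₀ ∧ p.2 = j₀ then Polynomial.X else Polynomial.C (A p.1 p.2) with hψ
  set g : Polynomial F := MvPolynomial.eval₂ Polynomial.C ψ f with hg
  have key : ∀ x : F,
      MvPolynomial.eval (fun p => (updEntry A i₀ j₀ x) p.1 p.2) f = Polynomial.eval x g := by
    intro x
    have h0 : Polynomial.eval x g = (Polynomial.evalRingHom x) (MvPolynomial.eval₂ Polynomial.C ψ f) := rfl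
    rw [h0, MvPolynomial.eval₂_comp_left (Polynomial.evalRingHom x) Polynomial.C ψ f]
    have h1 : (Polynomial.evalRingHom x).comp Polynomial.C = RingHom.id F := by
      ext c; simp
    have h2 : (Polynomial.evalRingHom x) ∘ ψ = fun p => (updEntry A i₀ j₀ x) p.1 p.2 := by
      funext p
      simp only [hψ, Function.comp_apply, updEntry, Matrix.of_apply, apply_ite
        (Polynomial.evalRingHom x)]
      simp
    rw [h1, h2, MvPolynomial.eval₂_id]
  have hgne : g ≠ 0 := by
    intro h
    apply hf
    have := key (A i₀ j₀)
    rw [updEntry_self, h] at this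
    simpa using this
  have hfin : ({x : F | g.IsRoot x} ∪ {A i₀ j₀}).Finite :=
    (Polynomial.finite_setOf_isRoot hgne).union (Set.finite_singleton _)
  obtain ⟨x, hx⟩ := hfin.infinite_compl.nonempty
  simp only [Set.mem_compl_iff, Set.mem_union, Set.mem_singleton_iff, Set.mem_setOf_eq,
    not_or] at hx
  refine ⟨updEntry A i₀ j₀ x, prk_updEntry A hmn hr₀ hc₀ hper hi₀ hj₀ hx.2, ?_⟩
  rw [key x]
  exact hx.1

end StepMain

lemma climb {n : ℕ} {F : Type*} [Field F] [Infinite F] {k : ℕ} (hkn : k ≤ n) :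
    ∀ (d : ℕ) (A : Matrix (Fin n) (Fin n) F) (f : MvPolynomial (Fin n × Fin n) F),
      prk A ≤ k → k - prk A = d → MvPolynomial.eval (fun p => A p.1 p.2) f ≠ 0 →
      ∃ X : Matrix (Fin n) (Fin n) F,
        prk X = k ∧ MvPolynomial.eval (fun p => X p.1 p.2) f ≠ 0 := by
  intro d
  induction d with
  | zero => exact fun A f h1 h2 h3 => ⟨A, by omega, h3⟩
  | succ d ih =>
    intro A f h1 h2 h3
    obtain ⟨A', hA', hf'⟩ := step A (by omega) f h3
    exact ih A' f (by omega) (by omega) hf'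


end

theorem stmt_7 {n : ℕ} {F : Type*} [Field F] [Infinite F] (hn : 3 ≤ n) (hchar : (2 : F) ≠ 0)
    (k : ℕ) (hk1 : 1 ≤ k) (hk2 : k ≤ n)
    (A : Matrix (Fin n) (Fin n) F) (hA : prk A ≤ k)
    (f : MvPolynomial (Fin n × Fin n) F)
    (hf : MvPolynomial.eval (fun p => A p.1 p.2) f ≠ 0) :
    ∃ X : Matrix (Fin n) (Fin n) F,
      prk X = k ∧ MvPolynomial.eval (fun p => X p.1 p.2) f ≠ 0 :=
  climb hk2 (k - prk A) A f hA rfl hf
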